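/- arXiv:1211.5968 — 3 statements merged into one kernel-verified Lean document; each statement's English description precedes it below -/
import Mathlib

section
/- Let μ > 0, α > 0 and set λ = μ·α/(1+α). Then for every real N > 1, every δ ∈ (0,1) and every real x ≥ 0 with 1+x ≤ δ·N^α, one has λ − μ·log(1+x)/(log(1+x)+log N) ≥ μ·log(1/δ) / ((α+1)²·log N). -/
/-!
Write `L = log (1 + x)`, `n = log N` and `d = log (1 / δ) ≥ 0`. The level constraint gives
`L + d ≤ α n`, and the drift equals `μ (α n - L) / ((1 + α) (L + n))`. Its numerator is at
least `μ d`, and its denominator at most `(1 + α)² n` because `L ≤ α n`.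
-/

open Real

lemma log_le_log_add_mul_log_of_le_mul_rpow {y δ N α : ℝ} (hy : 0 < y) (hδ : 0 < δ)
    (hN : 0 < N) (h : y ≤ δ * N ^ α) : log y ≤ log δ + α * log N := by
  calc log y ≤ log (δ * N ^ α) := log_le_log hy h
    _ = log δ + α * log N := by rw [log_mul hδ.ne' (rpow_pos_of_pos hN α).ne', log_rpow hN]

lemma mul_div_le_sub_mul_div_of_add_le_mul {μ a L n d : ℝ} (hμ : 0 ≤ μ) (hL : 0 ≤ L)
    (hn : 0 < n) (hd : 0 ≤ d) (hLd : L + d ≤ a * n) :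
    μ * d / ((a + 1) ^ 2 * n) ≤ μ * a / (1 + a) - μ * (L / (L + n)) := by
  have ha : 0 ≤ a := nonneg_of_mul_nonneg_left (by linarith) hn
  have hLn : 0 < L + n := by positivity
  calc μ * d / ((a + 1) ^ 2 * n) = μ * d / ((1 + a) * ((1 + a) * n)) := by ring_nf
    _ ≤ μ * d / ((1 + a) * (L + n)) := by gcongr; linarith
    _ ≤ μ * (a * n - L) / ((1 + a) * (L + n)) := by gcongr; linarith
    _ = μ * a / (1 + a) - μ * (L / (L + n)) := by field_simp; ring

theorem stmt1_general (μ α : ℝ) (hμ : 0 < μ) (lam : ℝ)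
    (hlam : lam = μ * α / (1 + α)) (N : ℝ) (hN : 1 < N)
    (δ : ℝ) (hδ0 : 0 < δ) (hδ1 : δ < 1) (x : ℝ) (hx : 0 ≤ x)
    (hxb : 1 + x ≤ δ * N ^ α) :
    lam - μ * (Real.log (1 + x) / (Real.log (1 + x) + Real.log N)) ≥
      μ * Real.log (1 / δ) / ((α + 1) ^ 2 * Real.log N) := by
  subst hlam
  have hlevel := log_le_log_add_mul_log_of_le_mul_rpow (by linarith) hδ0 (by linarith) hxb
  have hlogδ : log (1 / δ) = -log δ := by rw [one_div, log_inv]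
  have hd : 0 ≤ log (1 / δ) := log_nonneg (one_le_one_div hδ0 hδ1.le)
  exact mul_div_le_sub_mul_div_of_add_le_mul hμ.le (log_nonneg (by linarith)) (log_pos hN)
    hd (by linarith)

/-- Uniform positive drift of order `1/log N` below the level `δ·N^α` for the
saturated one-dimensional queue with `λ = μ·α/(1+α)`. -/
theorem stmt1 (μ α : ℝ) (hμ : 0 < μ) (hα : 0 < α) (lam : ℝ)
    (hlam : lam = μ * α / (1 + α)) (N : ℝ) (hN : 1 < N)
    (δ : ℝ) (hδ0 : 0 < δ) (hδ1 : δ < 1) (x : ℝ) (hx : 0 ≤ x)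
    (hxb : 1 + x ≤ δ * N ^ α) :
    lam - μ * (Real.log (1 + x) / (Real.log (1 + x) + Real.log N)) ≥
      μ * Real.log (1 / δ) / ((α + 1) ^ 2 * Real.log N) :=
  stmt1_general μ α hμ lam hlam N hN δ hδ0 hδ1 x hx hxb
end

section
/- For all reals 0 < a < b, the supremum over t ∈ [a,b] of | ∫₀ᵗ ((t−v)/(1+t−v))·(log N)·N^{−v} dv − t/(1+t) | tends to 0 as the real parameter N tends to +∞. -/
/-!
With `c = log N` the weight `log N · N^{-v} = c e^{-cv}` is a probability density on `[0, ∞)`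
concentrating at `v = 0` as `c → ∞`: its mass on `[0, t]` is `1 - e^{-ct}` and its first moment is
at most `1/c`. Since `x ↦ x/(1+x)` is `1`-Lipschitz on `[0, ∞)`, the integral differs from the
value `t/(1+t)` of the integrand at `v = 0` by at most `1/c + e^{-ct} ≤ 1/log N + N^{-a}`,
uniformly in `t ∈ [a, b]`.
-/

open Filter Topology Real Set MeasureTheory

lemma hasDerivAt_exp_neg_mul (c v : ℝ) :
    HasDerivAt (fun v => exp (-(c * v))) (exp (-(c * v)) * -c) v := by
  simpa using ((hasDerivAt_id v).const_mul c).neg.exp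

lemma integral_mul_exp_neg_mul (c t : ℝ) :
    ∫ v in (0:ℝ)..t, c * exp (-(c * v)) = 1 - exp (-(c * t)) := by
  have hderiv (v : ℝ) : HasDerivAt (fun v => -exp (-(c * v))) (c * exp (-(c * v))) v :=
    (hasDerivAt_exp_neg_mul c v).fun_neg.congr_deriv (by ring)
  rw [intervalIntegral.integral_eq_sub_of_hasDerivAt (fun v _ => hderiv v)
    (Continuous.intervalIntegrable (by fun_prop) _ _)]
  simp only [mul_zero, neg_zero, exp_zero, sub_neg_eq_add]
  ring

lemma integral_id_mul_mul_exp_neg_mul {c : ℝ} (hc : c ≠ 0) (t : ℝ) :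
    ∫ v in (0:ℝ)..t, v * (c * exp (-(c * v))) = 1 / c - (t + 1 / c) * exp (-(c * t)) := by
  have hderiv (v : ℝ) :
      HasDerivAt (fun v => -(v + 1 / c) * exp (-(c * v))) (v * (c * exp (-(c * v)))) v := by
    refine (((hasDerivAt_id' v).add_const (1 / c)).fun_neg.fun_mul
      (hasDerivAt_exp_neg_mul c v)).congr_deriv ?_
    field_simp
    ring
  rw [intervalIntegral.integral_eq_sub_of_hasDerivAt (fun v _ => hderiv v)
    (Continuous.intervalIntegrable (by fun_prop) _ _)]
  simp only [zero_add, mul_zero, neg_zero, exp_zero, mul_one]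
  ring

lemma abs_div_one_add_sub_div_one_add_le {x y : ℝ} (hx : 0 ≤ x) (hy : 0 ≤ y) :
    |x / (1 + x) - y / (1 + y)| ≤ |x - y| := by
  have hxy : x / (1 + x) - y / (1 + y) = (x - y) / ((1 + x) * (1 + y)) := by
    field_simp
    ring
  rw [hxy, abs_div, abs_of_pos (by positivity : (0:ℝ) < (1 + x) * (1 + y))]
  exact div_le_self (abs_nonneg _) (by nlinarith)

lemma abs_integral_mul_exp_neg_mul_sub_le {f : ℝ → ℝ} {c t L : ℝ} (hc : 0 < c) (ht : 0 ≤ t)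
    (hL : 0 ≤ L) (hf : IntervalIntegrable f volume 0 t)
    (hlip : ∀ v ∈ Icc 0 t, |f v - f 0| ≤ L * v) :
    |(∫ v in (0:ℝ)..t, f v * (c * exp (-(c * v)))) - f 0|
      ≤ L / c + |f 0| * exp (-(c * t)) := by
  have hkernel : Continuous fun v => c * exp (-(c * v)) := by fun_prop
  have hdev : IntervalIntegrable (fun v => (f v - f 0) * (c * exp (-(c * v)))) volume 0 t :=
    (hf.sub intervalIntegrable_const).mul_continuousOn hkernel.continuousOn
  have hsplit : (∫ v in (0:ℝ)..t, f v * (c * exp (-(c * v)))) - f 0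
      = (∫ v in (0:ℝ)..t, (f v - f 0) * (c * exp (-(c * v)))) - f 0 * exp (-(c * t)) := by
    simp only [sub_mul]
    rw [intervalIntegral.integral_sub (hf.mul_continuousOn hkernel.continuousOn)
      (Continuous.intervalIntegrable (by fun_prop) _ _), intervalIntegral.integral_const_mul,
      integral_mul_exp_neg_mul]
    ring
  have hmoment : |∫ v in (0:ℝ)..t, (f v - f 0) * (c * exp (-(c * v)))| ≤ L / c :=
    calc |∫ v in (0:ℝ)..t, (f v - f 0) * (c * exp (-(c * v)))|
        ≤ ∫ v in (0:ℝ)..t, |(f v - f 0) * (c * exp (-(c * v)))| :=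
          intervalIntegral.abs_integral_le_integral_abs ht
      _ ≤ ∫ v in (0:ℝ)..t, L * (v * (c * exp (-(c * v)))) := by
          refine intervalIntegral.integral_mono_on ht hdev.abs
            (Continuous.intervalIntegrable (by fun_prop) _ _) fun v hv => ?_
          rw [abs_mul, abs_of_pos (by positivity : 0 < c * exp (-(c * v))), ← mul_assoc L]
          exact mul_le_mul_of_nonneg_right (hlip v hv) (by positivity)
      _ = L * (1 / c - (t + 1 / c) * exp (-(c * t))) := by
          rw [intervalIntegral.integral_const_mul, integral_id_mul_mul_exp_neg_mul hc.ne']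
      _ ≤ L / c := by
          have : 0 ≤ (t + 1 / c) * exp (-(c * t)) := by positivity
          rw [mul_sub, mul_one_div]
          linarith [mul_nonneg hL this]
  rw [hsplit]
  calc _ ≤ |∫ v in (0:ℝ)..t, (f v - f 0) * (c * exp (-(c * v)))| + |f 0 * exp (-(c * t))| :=
        abs_sub _ _
    _ ≤ L / c + |f 0| * exp (-(c * t)) := by
        rw [abs_mul, abs_of_pos (exp_pos _)]
        gcongr

lemma abs_integral_drift_sub_le {N t : ℝ} (hN : 1 < N) (ht : 0 ≤ t) :
    |(∫ v in (0:ℝ)..t, (t - v) / (1 + t - v) * (log N * N ^ (-v))) - t / (1 + t)|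
      ≤ 1 / log N + N ^ (-t) := by
  have hN0 : 0 < N := one_pos.trans hN
  have hrpow (s : ℝ) : N ^ (-s) = exp (-(log N * s)) := by
    rw [rpow_def_of_pos hN0, mul_neg]
  have hlip : ∀ v ∈ Icc 0 t, |(t - v) / (1 + t - v) - (t - 0) / (1 + t - 0)| ≤ 1 * v := by
    intro v ⟨hv0, hvt⟩
    rw [add_sub_assoc, add_sub_assoc, sub_zero, one_mul]
    simpa [abs_of_nonneg hv0] using
      abs_div_one_add_sub_div_one_add_le (sub_nonneg.2 hvt) ht
  have hcont : ContinuousOn (fun v => (t - v) / (1 + t - v)) (uIcc 0 t) :=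
    ContinuousOn.div (by fun_prop) (by fun_prop) fun v hv => by
      rw [uIcc_of_le ht] at hv
      linarith [hv.2]
  have hbound := abs_integral_mul_exp_neg_mul_sub_le (log_pos hN) ht zero_le_one
    hcont.intervalIntegrable hlip
  have hvalue : |t / (1 + t)| ≤ 1 := by
    rw [abs_of_nonneg (by positivity), div_le_one (by positivity)]
    linarith
  simp only [hrpow, sub_zero] at hbound ⊢
  calc _ ≤ _ := hbound
    _ ≤ 1 / log N + exp (-(log N * t)) := by
        gcongr
        exact mul_le_of_le_one_left (exp_pos _).le hvalue

/-- Uniform identification of the drift `t/(1+t)` over `t ∈ [a,b]` as `N → ∞`. -/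
theorem stmt4 (a b : ℝ) (ha : 0 < a) (hab : a < b) :
    Tendsto (fun N : ℝ =>
        ⨆ t : Set.Icc a b,
          |(∫ v in (0:ℝ)..(t:ℝ), ((t:ℝ) - v) / (1 + (t:ℝ) - v) * (Real.log N * N ^ (-v))) -
            (t:ℝ) / (1 + (t:ℝ))|)
      atTop (𝓝 0) := by
  have : Nonempty (Set.Icc a b) := ⟨⟨a, le_rfl, hab.le⟩⟩
  have hbound : Tendsto (fun N : ℝ => 1 / log N + N ^ (-a)) atTop (𝓝 0) := by
    simpa only [add_zero] using
      ((tendsto_const_nhds (x := (1:ℝ))).div_atTop tendsto_log_atTop).add (tendsto_rpow_neg_atTop ha)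
  refine tendsto_of_tendsto_of_tendsto_of_le_of_le' tendsto_const_nhds hbound
    (Eventually.of_forall fun N => Real.iSup_nonneg fun t => abs_nonneg _) ?_
  filter_upwards [eventually_gt_atTop 1] with N hN
  refine ciSup_le fun t => (abs_integral_drift_sub_le hN (ha.le.trans t.2.1)).trans ?_
  gcongr
  exacts [hN.le, t.2.1]
end

section
/- Let μ > 0, α > 0, δ ∈ (0,1], T > 0, and set K = μ/(1+α)². Let h : [0,T] → [δ,1] be differentiable with h(0) = δ and h'(t) = −K·log h(t). For each real N with (α+1)·log N + log δ > 0, let h_N : [0,T] → [δ,1] be differentiable with h_N(0) = δ and h_N'(t) = −(μ/(α+1))·log h_N(t) / (α + 1 + log h_N(t)/log N). Then there exist C > 0 and N₀ such that for all N ≥ N₀ and all t ∈ [0,T], |h_N(t) − h(t)| ≤ C / log N. -/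
/-!
On `[δ, 1]` the fluid drift `x ↦ -K log x` is Lipschitz with constant `K / δ`. Writing
`l = log x ∈ [log δ, 0]` and `a = α + 1`, the drift of `h_N` differs from it by exactly
`μ l² / (a² log N (a + l / log N))`, which is `O(1 / log N)` uniformly once `log N` is large
enough that `a + l / log N ≥ a / 2`. So `h_N` is an approximate trajectory of the fluid ODE
with the same initial value `δ`, and Grönwall's inequality gives
`|h_N t - h t| ≤ (ε / L) e^{L T}` with `ε = O(1 / log N)`.
-/

open Set NNReal

theorem Real.lipschitzOnWith_log_Ici {δ : ℝ} (hδ : 0 < δ) :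
    LipschitzOnWith δ⁻¹.toNNReal Real.log (Ici δ) := by
  refine (convex_Ici δ).lipschitzOnWith_of_nnnorm_hasDerivWithin_le
    (fun x hx => (Real.hasDerivAt_log (hδ.trans_le hx).ne').hasDerivWithinAt) fun x hx => ?_
  have hx0 : 0 < x := hδ.trans_le hx
  rw [← NNReal.coe_le_coe, coe_nnnorm, Real.coe_toNNReal _ (inv_pos.2 hδ).le, Real.norm_eq_abs,
    abs_of_pos (inv_pos.2 hx0)]
  exact inv_anti₀ hδ hx

theorem dist_le_of_approx_trajectory_of_trajectory {E : Type*} [NormedAddCommGroup E]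
    [NormedSpace ℝ E] {v : E → E} {s : Set E} {L : ℝ≥0} (hL : 0 < L)
    (hv : LipschitzOnWith L v s) {f f' g : ℝ → E} {a b ε : ℝ}
    (hf : ∀ t ∈ Icc a b, HasDerivAt f (f' t) t)
    (hfv : ∀ t ∈ Icc a b, dist (f' t) (v (f t)) ≤ ε) (hfs : ∀ t ∈ Icc a b, f t ∈ s)
    (hg : ∀ t ∈ Icc a b, HasDerivAt g (v (g t)) t) (hgs : ∀ t ∈ Icc a b, g t ∈ s)
    (hfg : f a = g a) :
    ∀ t ∈ Icc a b, dist (f t) (g t) ≤ ε / L * Real.exp (L * (b - a)) := by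
  intro t ht
  have hε : 0 ≤ ε := dist_nonneg.trans (hfv t ht)
  have hIco {t : ℝ} (ht : t ∈ Ico a b) : t ∈ Icc a b := Ico_subset_Icc_self ht
  have hgronwall := dist_le_of_approx_trajectories_ODE_of_mem (v := fun _ => v)
    (s := fun _ => s) (fun _ _ => hv)
    (fun t ht => (hf t ht).continuousAt.continuousWithinAt)
    (fun t ht => (hf t (hIco ht)).hasDerivWithinAt) (fun t ht => hfv t (hIco ht))
    (fun t ht => hfs t (hIco ht))
    (fun t ht => (hg t ht).continuousAt.continuousWithinAt)
    (fun t ht => (hg t (hIco ht)).hasDerivWithinAt) (εg := 0) (fun t _ => (dist_self _).le)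
    (fun t ht => hgs t (hIco ht)) (δ := 0) (by rw [hfg, dist_self]) t ht
  calc dist (f t) (g t) ≤ gronwallBound 0 L ε (t - a) := by simpa using hgronwall
    _ ≤ gronwallBound 0 L ε (b - a) :=
      gronwallBound_mono le_rfl hε L.2 (by linarith [ht.2])
    _ = ε / L * (Real.exp (L * (b - a)) - 1) := by
      simp [gronwallBound_of_K_ne_0 (NNReal.coe_pos.2 hL).ne']
    _ ≤ ε / L * Real.exp (L * (b - a)) := by gcongr; linarith

theorem abs_perturbed_drift_sub_le {μ a M l m : ℝ} (hμ : 0 ≤ μ) (ha : 0 < a) (hM : 0 < M)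
    (hml : m ≤ l) (hl : l ≤ 0) (hmM : -2 * m ≤ a * M) :
    |-(μ / a) * l / (a + l / M) - -(μ / a ^ 2) * l| ≤ 2 * μ * m ^ 2 / a ^ 3 / M := by
  have hden : a / 2 ≤ a + l / M := by
    have : -(a / 2) ≤ l / M := by rw [le_div_iff₀ hM]; linarith
    linarith
  have hden_pos : 0 < a + l / M := by linarith
  have hdiff : -(μ / a) * l / (a + l / M) - -(μ / a ^ 2) * l
      = μ / a ^ 2 * (l ^ 2 / (M * (a + l / M))) := by
    have hne : a * M + l ≠ 0 := by linarith [mul_pos ha hM]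
    field_simp
    ring
  have hsq : l ^ 2 ≤ m ^ 2 := by nlinarith
  rw [hdiff, abs_of_nonneg (by positivity)]
  calc μ / a ^ 2 * (l ^ 2 / (M * (a + l / M))) ≤ μ / a ^ 2 * (m ^ 2 / (M * (a / 2))) := by
        gcongr
    _ = 2 * μ * m ^ 2 / a ^ 3 / M := by
        field_simp

theorem stmt8_general (μ α δ T : ℝ) (hμ : 0 < μ) (hα : 0 < α) (hδ : δ ∈ Set.Ioc (0:ℝ) 1)
    (K : ℝ) (hK : K = μ / (1 + α) ^ 2)
    (h : ℝ → ℝ) (hmap : ∀ t ∈ Set.Icc (0:ℝ) T, h t ∈ Set.Icc δ 1)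
    (h0 : h 0 = δ)
    (hderiv : ∀ t ∈ Set.Icc (0:ℝ) T, HasDerivAt h (-K * Real.log (h t)) t)
    (hN : ℝ → ℝ → ℝ)
    (hNmap : ∀ N : ℝ, 0 < (α + 1) * Real.log N + Real.log δ →
      ∀ t ∈ Set.Icc (0:ℝ) T, hN N t ∈ Set.Icc δ 1)
    (hN0 : ∀ N : ℝ, 0 < (α + 1) * Real.log N + Real.log δ → hN N 0 = δ)
    (hNderiv : ∀ N : ℝ, 0 < (α + 1) * Real.log N + Real.log δ →
      ∀ t ∈ Set.Icc (0:ℝ) T,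
        HasDerivAt (hN N)
          (-(μ / (α + 1)) * Real.log (hN N t) / (α + 1 + Real.log (hN N t) / Real.log N)) t) :
    ∃ C > 0, ∃ N₀ : ℝ, ∀ N ≥ N₀, 0 < (α + 1) * Real.log N + Real.log δ →
      ∀ t ∈ Set.Icc (0:ℝ) T, |hN N t - h t| ≤ C / Real.log N := by
  obtain ⟨hδ0, hδ1⟩ := hδ
  obtain rfl : K = μ / (α + 1) ^ 2 := by rw [hK, add_comm]
  have hlogδ : Real.log δ ≤ 0 := Real.log_nonpos hδ0.le hδ1
  set L : ℝ≥0 := ‖-(μ / (α + 1) ^ 2)‖₊ * δ⁻¹.toNNReal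
  have hL : 0 < L := mul_pos (nnnorm_pos.2 (neg_ne_zero.2 (by positivity)))
    (Real.toNNReal_pos.2 (inv_pos.2 hδ0))
  have hv : LipschitzOnWith L (fun x => -(μ / (α + 1) ^ 2) * Real.log x) (Icc δ 1) :=
    ((lipschitzWith_smul _).comp_lipschitzOnWith (Real.lipschitzOnWith_log_Ici hδ0)).mono
      Icc_subset_Ici_self
  set C₁ : ℝ := 2 * μ * Real.log δ ^ 2 / (α + 1) ^ 3 + 1
  refine ⟨C₁ * Real.exp (L * T) / L, by positivity, Real.exp (-2 * Real.log δ / (α + 1)),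
    fun N hN₀ hNlog t ht => ?_⟩
  have hlogN : -2 * Real.log δ ≤ (α + 1) * Real.log N := by
    rw [← div_le_iff₀' (by positivity), Real.le_log_iff_exp_le ((Real.exp_pos _).trans_le hN₀)]
    exact hN₀
  have hlogN_pos : 0 < Real.log N := by nlinarith
  have hdrift : ∀ x ∈ Icc δ 1,
      dist (-(μ / (α + 1)) * Real.log x / (α + 1 + Real.log x / Real.log N))
        (-(μ / (α + 1) ^ 2) * Real.log x) ≤ C₁ / Real.log N := fun x hx =>
    (abs_perturbed_drift_sub_le hμ.le (by positivity) hlogN_pos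
      (Real.log_le_log hδ0 hx.1) (Real.log_nonpos (hδ0.trans_le hx.1).le hx.2) hlogN).trans
      (by gcongr; linarith)
  have hclose := dist_le_of_approx_trajectory_of_trajectory hL hv (hNderiv N hNlog)
    (fun s hs => hdrift _ (hNmap N hNlog s hs)) (hNmap N hNlog) hderiv hmap
    (by rw [hN0 N hNlog, h0]) t ht
  rw [← Real.dist_eq]
  convert hclose using 1
  rw [sub_zero]
  ring

/-- The `N`-dependent centering function `h_N` of the CLT converges to the fluid
limit `h` at the slow rate `1/log N`, uniformly on `[0,T]`. -/
theorem stmt8 (μ α δ T : ℝ) (hμ : 0 < μ) (hα : 0 < α) (hδ : δ ∈ Set.Ioc (0:ℝ) 1)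
    (hT : 0 < T) (K : ℝ) (hK : K = μ / (1 + α) ^ 2)
    (h : ℝ → ℝ) (hmap : ∀ t ∈ Set.Icc (0:ℝ) T, h t ∈ Set.Icc δ 1)
    (h0 : h 0 = δ)
    (hderiv : ∀ t ∈ Set.Icc (0:ℝ) T, HasDerivAt h (-K * Real.log (h t)) t)
    (hN : ℝ → ℝ → ℝ)
    (hNmap : ∀ N : ℝ, 0 < (α + 1) * Real.log N + Real.log δ →
      ∀ t ∈ Set.Icc (0:ℝ) T, hN N t ∈ Set.Icc δ 1)
    (hN0 : ∀ N : ℝ, 0 < (α + 1) * Real.log N + Real.log δ → hN N 0 = δ)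
    (hNderiv : ∀ N : ℝ, 0 < (α + 1) * Real.log N + Real.log δ →
      ∀ t ∈ Set.Icc (0:ℝ) T,
        HasDerivAt (hN N)
          (-(μ / (α + 1)) * Real.log (hN N t) / (α + 1 + Real.log (hN N t) / Real.log N)) t) :
    ∃ C > 0, ∃ N₀ : ℝ, ∀ N ≥ N₀, 0 < (α + 1) * Real.log N + Real.log δ →
      ∀ t ∈ Set.Icc (0:ℝ) T, |hN N t - h t| ≤ C / Real.log N :=
  stmt8_general μ α δ T hμ hα hδ K hK h hmap h0 hderiv hN hNmap hN0 hNderiv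
end
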